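/- A generalized topological space (X, μ) is sλT_{1/2} (every sg_λ-closed set is sλ-closed) if and only if every singleton of X is either sλ-open or sλ-closed. -/
import Mathlib


open Set

variable {X : Type*}

def IsGT (μ : Set (Set X)) : Prop :=
  ∅ ∈ μ ∧ ∀ S : Set (Set X), S ⊆ μ → ⋃₀ S ∈ μ

def muInt (μ : Set (Set X)) (A : Set X) : Set X := ⋃₀ {U | U ∈ μ ∧ U ⊆ A}

def muCl (μ : Set (Set X)) (A : Set X) : Set X := ⋂₀ {F | Fᶜ ∈ μ ∧ A ⊆ F}

def sOpen (μ : Set (Set X)) (A : Set X) : Prop := A ⊆ muCl μ (muInt μ A)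

def sClosed (μ : Set (Set X)) (A : Set X) : Prop := sOpen μ Aᶜ

def sInt (μ : Set (Set X)) (A : Set X) : Set X := ⋃₀ {U | sOpen μ U ∧ U ⊆ A}

def sCl (μ : Set (Set X)) (A : Set X) : Set X := ⋂₀ {F | sClosed μ F ∧ A ⊆ F}

def sWedge (μ : Set (Set X)) (A : Set X) : Set X := ⋂₀ {U | sOpen μ U ∧ A ⊆ U}

def sVee (μ : Set (Set X)) (A : Set X) : Set X := ⋃₀ {F | sClosed μ F ∧ F ⊆ A}

def sLambdaClosed (μ : Set (Set X)) (A : Set X) : Prop :=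
  ∃ K P : Set X, K = sWedge μ K ∧ sClosed μ P ∧ A = K ∩ P

def sLambdaOpen (μ : Set (Set X)) (A : Set X) : Prop := sLambdaClosed μ Aᶜ

def sclL (μ : Set (Set X)) (A : Set X) : Set X := ⋂₀ {F | sLambdaClosed μ F ∧ A ⊆ F}

def sIntL (μ : Set (Set X)) (A : Set X) : Set X := ⋃₀ {U | sLambdaOpen μ U ∧ U ⊆ A}

def sWedgeL (μ : Set (Set X)) (A : Set X) : Set X := ⋂₀ {U | sLambdaOpen μ U ∧ A ⊆ U}

def sVeeL (μ : Set (Set X)) (A : Set X) : Set X := ⋃₀ {F | sLambdaClosed μ F ∧ F ⊆ A}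

def sgClosed (μ : Set (Set X)) (A : Set X) : Prop :=
  ∀ U : Set X, sLambdaOpen μ U → A ⊆ U → sclL μ A ⊆ U

def sgOpen (μ : Set (Set X)) (A : Set X) : Prop := sgClosed μ Aᶜ

def sBetaClosed (μ : Set (Set X)) (A : Set X) : Prop :=
  ∃ H Q : Set X, H = sWedgeL μ H ∧ sLambdaClosed μ Q ∧ A = H ∩ Q

def sT0 (μ : Set (Set X)) : Prop :=
  ∀ x y : X, x ≠ y → ∃ U : Set X, sLambdaOpen μ U ∧
    ((x ∈ U ∧ y ∉ U) ∨ (y ∈ U ∧ x ∉ U))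

def sT1 (μ : Set (Set X)) : Prop :=
  ∀ x y : X, x ≠ y → ∃ U V : Set X, sLambdaOpen μ U ∧ sLambdaOpen μ V ∧
    x ∈ U ∧ y ∉ U ∧ y ∈ V ∧ x ∉ V

lemma muInt_mono (μ : Set (Set X)) {A B : Set X} (h : A ⊆ B) :
    muInt μ A ⊆ muInt μ B := by
  intro x ⟨U, ⟨hU, hUA⟩, hxU⟩
  exact ⟨U, ⟨hU, hUA.trans h⟩, hxU⟩

lemma muCl_mono (μ : Set (Set X)) {A B : Set X} (h : A ⊆ B) :
    muCl μ A ⊆ muCl μ B := by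
  intro x hx F ⟨hF, hBF⟩
  exact hx F ⟨hF, h.trans hBF⟩

lemma sOpen_sUnion (μ : Set (Set X)) (S : Set (Set X)) (h : ∀ U ∈ S, sOpen μ U) :
    sOpen μ (⋃₀ S) := by
  rintro x ⟨U, hU, hxU⟩
  exact muCl_mono μ (muInt_mono μ (subset_sUnion_of_mem hU)) (h U hU hxU)

lemma sClosed_sInter (μ : Set (Set X)) (S : Set (Set X)) (h : ∀ F ∈ S, sClosed μ F) :
    sClosed μ (⋂₀ S) := by
  unfold sClosed
  rw [Set.compl_sInter]
  apply sOpen_sUnion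
  rintro U ⟨F, hF, rfl⟩
  exact h F hF

lemma subset_sWedge (μ : Set (Set X)) (A : Set X) : A ⊆ sWedge μ A := by
  intro x hx U ⟨_, hAU⟩
  exact hAU hx

lemma sLambdaClosed_sInter (μ : Set (Set X)) (S : Set (Set X))
    (h : ∀ F ∈ S, sLambdaClosed μ F) : sLambdaClosed μ (⋂₀ S) := by
  choose K P hK hP hFP using h
  refine ⟨⋂ F, ⋂ hF : F ∈ S, K F hF, ⋂ F, ⋂ hF : F ∈ S, P F hF, ?_, ?_, ?_⟩
  · apply Set.Subset.antisymm (subset_sWedge μ _)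
    intro x hx
    simp only [Set.mem_iInter]
    intro F hF
    have hfix := hK F hF
    rw [hfix]
    rintro U ⟨hUo, hKU⟩
    refine hx U ⟨hUo, ?_⟩
    intro y hy
    simp only [Set.mem_iInter] at hy
    exact hKU (hy F hF)
  · have : (⋂ F, ⋂ hF : F ∈ S, P F hF) = ⋂₀ {T | ∃ F, ∃ hF : F ∈ S, T = P F hF} := by
      ext x
      simp only [Set.mem_iInter, Set.mem_sInter, Set.mem_setOf_eq]
      constructor
      · rintro hx T ⟨F, hF, rfl⟩; exact hx F hF
      · intro hx F hF; exact hx _ ⟨F, hF, rfl⟩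
    rw [this]
    apply sClosed_sInter
    rintro T ⟨F, hF, rfl⟩
    exact hP F hF
  · ext x
    simp only [Set.mem_sInter, Set.mem_inter_iff, Set.mem_iInter]
    constructor
    · intro hx
      constructor <;> intro F hF <;>
        · have := hx F hF
          rw [hFP F hF] at this
          first | exact this.1 | exact this.2
    · rintro ⟨h1, h2⟩ F hF
      rw [hFP F hF]
      exact ⟨h1 F hF, h2 F hF⟩

lemma sLambdaClosed_sclL (μ : Set (Set X)) (A : Set X) : sLambdaClosed μ (sclL μ A) := by
  apply sLambdaClosed_sInter
  rintro F ⟨hF, _⟩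
  exact hF

lemma subset_sclL (μ : Set (Set X)) (A : Set X) : A ⊆ sclL μ A := by
  intro x hx F ⟨_, hAF⟩
  exact hAF hx

theorem stmt13 (μ : Set (Set X)) (hμ : IsGT μ) :
    (∀ A : Set X, sgClosed μ A → sLambdaClosed μ A) ↔
    (∀ x : X, sLambdaOpen μ ({x} : Set X) ∨ sLambdaClosed μ ({x} : Set X)) := by
  constructor
  · intro h x
    by_cases hc : sLambdaClosed μ ({x} : Set X)
    · exact Or.inr hc
    · left
      show sLambdaClosed μ ({x} : Set X)ᶜ
      apply h
      intro U hU hsub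
      by_cases hxU : x ∈ U
      · have : U = Set.univ := by
          apply Set.eq_univ_of_forall
          intro y
          by_cases hy : y = x
          · exact hy ▸ hxU
          · exact hsub (by simpa using hy)
        rw [this]
        exact Set.subset_univ _
      · have : U = ({x} : Set X)ᶜ := by
          apply Set.Subset.antisymm _ hsub
          intro y hyU
          simp only [Set.mem_compl_iff, Set.mem_singleton_iff]
          rintro rfl
          exact hxU hyU
        exfalso
        apply hc
        rw [this] at hU
        unfold sLambdaOpen at hU
        rwa [compl_compl] at hU
  · intro h A hA
    have hsub : sclL μ A ⊆ A := by
      intro x hx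
      by_contra hxA
      rcases h x with hso | hsc
      · have hcl : sLambdaClosed μ ({x} : Set X)ᶜ := hso
        have : x ∈ ({x} : Set X)ᶜ := hx _ ⟨hcl, by simpa using hxA⟩
        exact this rfl
      · have hopen : sLambdaOpen μ ({x} : Set X)ᶜ := by
          unfold sLambdaOpen
          rwa [compl_compl]
        have := hA _ hopen (by simpa using hxA)
        exact (this hx) rfl
    have : A = sclL μ A := Set.Subset.antisymm (subset_sclL μ A) hsub
    rw [this]
    exact sLambdaClosed_sclL μ A
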